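/- arXiv:1202.4344 — 2 statements merged into one kernel-verified Lean document; each statement's English description precedes it below -/
import Mathlib

section
/- Let K : ℝ^d → ℝ be continuous, nonnegative, compactly supported, with K(x) > 0 for |x| ≤ R₁ and K(x) = 0 for |x| ≥ R₂, where 0 < R₁ < R₂ < ∞. Then there exists a constant C > 0 (depending only on K, R₁, R₂, d) such that for every nonnegative ρ ∈ L¹(ℝ^d) and every y ∈ ℝ^d, ∫_{ℝ^d} K(x−y) · ρ(x) / (∫_{ℝ^d} K(x−z) ρ(z) dz) dx ≤ C (with the convention that the integrand is 0 where ρ(x) = 0). -/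
/-!
Cover the support of `K` by finitely many balls `B_c` of radius `R₁ / 2`. Any two points of
`y + B_c` are less than `R₁` apart, so for `x ∈ y + B_c` the smoothing `(K ⋆ ρ)(x)` is at least
`m ∫_{y + B_c} ρ` with `m = min_{‖w‖ ≤ R₁} K > 0`. Hence on `y + B_c` the integrand is at most
`(M / m) ρ / ∫_{y + B_c} ρ` with `M = max K`, whose integral is at most `M / m`, and summing over
the cover gives `C = #cover · M / m`.
-/

open MeasureTheory Metric Set

noncomputable section

lemma integral_indicator_mul_div_setIntegral_le {α : Type*} [MeasurableSpace α] {μ : Measure α}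
    {s : Set α} (hs : MeasurableSet s) {c : ℝ} (hc : 0 ≤ c) (ρ : α → ℝ) :
    ∫ x, s.indicator (fun x => c * (ρ x / ∫ z in s, ρ z ∂μ)) x ∂μ ≤ c := by
  rw [integral_indicator hs, integral_const_mul, integral_div]
  exact mul_le_of_le_one_right hc (div_self_le_one _)

variable {E : Type*} [NormedAddCommGroup E] [MeasurableSpace E] {μ : Measure E} {K ρ : E → ℝ}

def normalizedKernelWeight (μ : Measure E) (K ρ : E → ℝ) (y x : E) : ℝ :=
  if ρ x = 0 then 0 else K (x - y) * ρ x / ∫ z, K (x - z) * ρ z ∂μ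

lemma normalizedKernelWeight_nonneg (hK : ∀ x, 0 ≤ K x) (hρ : ∀ x, 0 ≤ ρ x) (y x : E) :
    0 ≤ normalizedKernelWeight μ K ρ y x := by
  unfold normalizedKernelWeight
  split_ifs
  · exact le_rfl
  · exact div_nonneg (mul_nonneg (hK _) (hρ x))
      (integral_nonneg fun z => mul_nonneg (hK _) (hρ z))

variable [OpensMeasurableSpace E]

lemma integrable_kernel_mul {M : ℝ} (hKc : Continuous K) (hK : ∀ x, 0 ≤ K x)
    (hKM : ∀ x, K x ≤ M) (hρi : Integrable ρ μ) (x : E) :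
    Integrable (fun z => K (x - z) * ρ z) μ :=
  hρi.bdd_mul (hKc.comp (continuous_const.sub continuous_id)).aestronglyMeasurable
    (c := M) (Filter.Eventually.of_forall fun z => by
      rw [Real.norm_eq_abs, abs_of_nonneg (hK _)]
      exact hKM _)

lemma mul_setIntegral_ball_le_integral_kernel_mul {M m R : ℝ} (hKc : Continuous K)
    (hK : ∀ x, 0 ≤ K x) (hKM : ∀ x, K x ≤ M) (hKm : ∀ w, ‖w‖ ≤ R → m ≤ K w)
    (hρi : Integrable ρ μ) (hρ : ∀ x, 0 ≤ ρ x) {a x : E} (hx : x ∈ ball a (R / 2)) :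
    m * ∫ z in ball a (R / 2), ρ z ∂μ ≤ ∫ z, K (x - z) * ρ z ∂μ := by
  have hKρi := integrable_kernel_mul hKc hK hKM hρi (μ := μ) x
  calc m * ∫ z in ball a (R / 2), ρ z ∂μ = ∫ z in ball a (R / 2), m * ρ z ∂μ :=
        (integral_const_mul m ρ).symm
    _ ≤ ∫ z in ball a (R / 2), K (x - z) * ρ z ∂μ := by
        refine setIntegral_mono_on (hρi.const_mul m).integrableOn hKρi.integrableOn
          measurableSet_ball fun z hz => mul_le_mul_of_nonneg_right (hKm _ ?_) (hρ z)
        rw [← dist_eq_norm]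
        linarith [dist_triangle_right x z a, mem_ball.1 hx, mem_ball.1 hz]
    _ ≤ ∫ z, K (x - z) * ρ z ∂μ :=
        setIntegral_le_integral hKρi
          (Filter.Eventually.of_forall fun z => mul_nonneg (hK _) (hρ z))

lemma ae_normalizedKernelWeight_le_on_ball {M m R : ℝ} (hm : 0 < m) (hKc : Continuous K)
    (hK : ∀ x, 0 ≤ K x) (hKM : ∀ x, K x ≤ M) (hKm : ∀ w, ‖w‖ ≤ R → m ≤ K w)
    (hρi : Integrable ρ μ) (hρ : ∀ x, 0 ≤ ρ x) (a y : E) :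
    ∀ᵐ x ∂μ, x ∈ ball a (R / 2) → normalizedKernelWeight μ K ρ y x ≤
      M / m * (ρ x / ∫ z in ball a (R / 2), ρ z ∂μ) := by
  set I := ∫ z in ball a (R / 2), ρ z ∂μ
  rcases (setIntegral_nonneg measurableSet_ball fun z _ => hρ z : 0 ≤ I).eq_or_lt with hI | hI
  · have hρ0 : ρ =ᵐ[μ.restrict (ball a (R / 2))] 0 :=
      (setIntegral_eq_zero_iff_of_nonneg_ae (.of_forall hρ) hρi.integrableOn).1 hI.symm
    filter_upwards [(ae_restrict_iff' measurableSet_ball).1 hρ0] with x hx hxB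
    simp [normalizedKernelWeight, hx hxB]
  · refine .of_forall fun x hxB => ?_
    have hg := mul_setIntegral_ball_le_integral_kernel_mul hKc hK hKM hKm hρi hρ hxB (μ := μ)
    unfold normalizedKernelWeight
    split_ifs
    · simp [*]
    calc K (x - y) * ρ x / ∫ z, K (x - z) * ρ z ∂μ ≤ M * ρ x / (m * I) :=
          div_le_div₀ (mul_nonneg ((hK y).trans (hKM y)) (hρ x))
            (mul_le_mul_of_nonneg_right (hKM _) (hρ x)) (mul_pos hm hI) hg
      _ = M / m * (ρ x / I) := (div_mul_div_comm M m (ρ x) I).symm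

theorem integral_normalizedKernelWeight_le {M m R : ℝ} {t : Finset E} (hm : 0 < m)
    (hKc : Continuous K) (hK : ∀ x, 0 ≤ K x) (hKM : ∀ x, K x ≤ M)
    (hKm : ∀ w, ‖w‖ ≤ R → m ≤ K w) (hcover : Function.support K ⊆ ⋃ c ∈ t, ball c (R / 2))
    (hρi : Integrable ρ μ) (hρ : ∀ x, 0 ≤ ρ x) (y : E) :
    ∫ x, normalizedKernelWeight μ K ρ y x ∂μ ≤ t.card * (M / m) := by
  set majorant : E → E → ℝ := fun c => (ball (y + c) (R / 2)).indicator
    fun x => M / m * (ρ x / ∫ z in ball (y + c) (R / 2), ρ z ∂μ)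
  have hMm : 0 ≤ M / m := div_nonneg ((hK 0).trans (hKM 0)) hm.le
  have hmajorant_nonneg : ∀ c x, 0 ≤ majorant c x := fun c x => indicator_nonneg (fun z _ =>
    mul_nonneg hMm (div_nonneg (hρ z) (setIntegral_nonneg measurableSet_ball fun z _ => hρ z))) x
  have hmajorant_int : ∀ c, Integrable (majorant c) μ := fun c =>
    ((hρi.div_const _).const_mul _).indicator measurableSet_ball
  have hdom : ∀ᵐ x ∂μ, normalizedKernelWeight μ K ρ y x ≤ ∑ c ∈ t, majorant c x := by
    have hball : ∀ᵐ x ∂μ, ∀ c ∈ t, x ∈ ball (y + c) (R / 2) →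
        normalizedKernelWeight μ K ρ y x ≤ majorant c x := by
      rw [Filter.eventually_all_finset]
      intro c _
      filter_upwards [ae_normalizedKernelWeight_le_on_ball hm hKc hK hKM hKm hρi hρ (y + c) y]
        with x hx hxB
      simpa only [majorant, indicator_of_mem hxB] using hx hxB
    filter_upwards [hball] with x hx
    by_cases hxy : K (x - y) = 0
    · simpa [normalizedKernelWeight, hxy] using Finset.sum_nonneg fun c _ => hmajorant_nonneg c x
    obtain ⟨c, hc, hxc⟩ := mem_iUnion₂.1 (hcover hxy)
    have hxB : x ∈ ball (y + c) (R / 2) := by simpa only [mem_ball_iff_norm, sub_sub] using hxc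
    exact (hx c hc hxB).trans (Finset.single_le_sum (fun c _ => hmajorant_nonneg c x) hc)
  calc ∫ x, normalizedKernelWeight μ K ρ y x ∂μ ≤ ∫ x, ∑ c ∈ t, majorant c x ∂μ :=
        integral_mono_of_nonneg (.of_forall (normalizedKernelWeight_nonneg hK hρ y))
          (integrable_finsetSum t fun c _ => hmajorant_int c) hdom
    _ = ∑ c ∈ t, ∫ x, majorant c x ∂μ := integral_finsetSum t fun c _ => hmajorant_int c
    _ ≤ ∑ _c ∈ t, M / m := Finset.sum_le_sum fun c _ =>
        integral_indicator_mul_div_setIntegral_le measurableSet_ball hMm ρ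
    _ = t.card * (M / m) := by rw [Finset.sum_const, nsmul_eq_mul]

end

theorem kernel_normalization_bound_general
    (d : ℕ)
    (K : EuclideanSpace ℝ (Fin d) → ℝ)
    (hKcont : Continuous K) (hKnonneg : ∀ x, 0 ≤ K x)
    (hKsupp : HasCompactSupport K)
    (R₁ : ℝ) (hR₁ : 0 < R₁)
    (hKpos : ∀ x, ‖x‖ ≤ R₁ → 0 < K x) :
    ∃ C : ℝ, 0 < C ∧
      ∀ ρ : EuclideanSpace ℝ (Fin d) → ℝ,
        Integrable ρ → (∀ x, 0 ≤ ρ x) →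
        ∀ y : EuclideanSpace ℝ (Fin d),
          (∫ x, if ρ x = 0 then 0
                else K (x - y) * ρ x / ∫ z, K (x - z) * ρ z) ≤ C := by
  obtain ⟨xM, hKM⟩ := hKcont.exists_forall_ge_of_hasCompactSupport hKsupp
  obtain ⟨xm, hxm, hKm⟩ := (isCompact_closedBall (0 : EuclideanSpace ℝ (Fin d)) R₁).exists_isMinOn
    (nonempty_closedBall.2 hR₁.le) hKcont.continuousOn
  have hm : 0 < K xm := hKpos xm (mem_closedBall_zero_iff.1 hxm)
  obtain ⟨t, hcover⟩ := hKsupp.isCompact.elim_finite_subcover (fun c => ball c (R₁ / 2))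
    (fun _ => isOpen_ball) fun x _ => mem_iUnion.2 ⟨x, mem_ball_self (half_pos hR₁)⟩
  have ht : t.Nonempty := by
    have h0 : (0 : EuclideanSpace ℝ (Fin d)) ∈ tsupport K :=
      subset_tsupport K (hKpos 0 (by simpa using hR₁.le)).ne'
    obtain ⟨c, hc, -⟩ := mem_iUnion₂.1 (hcover h0)
    exact ⟨c, hc⟩
  refine ⟨t.card * (K xM / K xm),
    mul_pos (Nat.cast_pos.2 ht.card_pos) (div_pos (hm.trans_le (hKM xm)) hm), ?_⟩
  intro ρ hρi hρ y
  exact integral_normalizedKernelWeight_le hm hKcont hKnonneg hKM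
    (fun w hw => hKm (mem_closedBall_zero_iff.2 hw)) ((subset_tsupport K).trans hcover) hρi hρ y

/-- Kernel normalization lemma (Motsch–Tadmor): uniform bound on
`∫ K(x−y) ρ(x) / (K ⋆ ρ)(x) dx` independent of the nonnegative density `ρ`. -/
theorem kernel_normalization_bound
    (d : ℕ) (hd : 0 < d)
    (K : EuclideanSpace ℝ (Fin d) → ℝ)
    (hKcont : Continuous K) (hKnonneg : ∀ x, 0 ≤ K x)
    (hKsupp : HasCompactSupport K)
    (R₁ R₂ : ℝ) (hR₁ : 0 < R₁) (hR₁₂ : R₁ < R₂)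
    (hKpos : ∀ x, ‖x‖ ≤ R₁ → 0 < K x)
    (hKzero : ∀ x, R₂ ≤ ‖x‖ → K x = 0) :
    ∃ C : ℝ, 0 < C ∧
      ∀ ρ : EuclideanSpace ℝ (Fin d) → ℝ,
        Integrable ρ → (∀ x, 0 ≤ ρ x) →
        ∀ y : EuclideanSpace ℝ (Fin d),
          (∫ x, if ρ x = 0 then 0
                else K (x - y) * ρ x / ∫ z, K (x - z) * ρ z) ≤ C :=
  kernel_normalization_bound_general d K hKcont hKnonneg hKsupp R₁ hR₁ hKpos
end

section
/- Let K : ℝ^d → ℝ be continuous, nonnegative, compactly supported with K(0) > 0 and ∫ K = 1, and for r > 0 set K^r(x) = r^{−d} K(x/r). Then there exists a constant C > 0 independent of r such that for every nonnegative ρ ∈ L¹(ℝ^d) and every y ∈ ℝ^d, ∫_{ℝ^d} K^r(x−y) · ρ(x)/(∫_{ℝ^d} K^r(x−z) ρ(z) dz) dx ≤ C. -/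
/-! Choose `c > 0` with `c ≤ K` on the ball of radius `2ε` about `0`, a bound `K ≤ M`, and `N` balls
`ball p ε` covering the support of `K`. At scale `r`, a point `x` where the integrand is nonzero
lies in some `B_p = ball (y + r • p) (r * ε)`, and every point of `B_p` is at rescaled distance
`< 2ε` from `x`, so the denominator at `x` is at least `a * c * ∫_{B_p} ρ`. On `B_p` the integrand
is therefore at most `(M / c) * ρ / ∫_{B_p} ρ`, whose integral is at most `M / c`. Summing over
the balls gives `N * M / c`, in which neither the scale `r` nor the amplitude `a = r⁻¹ ^ d`
appears. -/

open MeasureTheory Metric Set Filter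

section Covering

variable {α ι : Type*} [MeasurableSpace α] {μ : Measure α}

lemma lintegral_ofReal_div_setIntegral_le_one {ρ : α → ℝ} {s : Set α}
    (hρ : IntegrableOn ρ s μ) (hρ0 : 0 ≤ᵐ[μ.restrict s] ρ) :
    ∫⁻ x in s, ENNReal.ofReal (ρ x / ∫ z in s, ρ z ∂μ) ∂μ ≤ 1 := by
  have hI : 0 ≤ ∫ z in s, ρ z ∂μ := integral_nonneg_of_ae hρ0
  simp_rw [div_eq_mul_inv, ENNReal.ofReal_mul' (inv_nonneg.2 hI)]
  rw [lintegral_mul_const' _ _ ENNReal.ofReal_ne_top, ← ofReal_integral_eq_lintegral_ofReal hρ hρ0,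
    ← ENNReal.ofReal_mul hI]
  exact ENNReal.ofReal_le_one.2 mul_inv_le_one

lemma mul_setIntegral_le_integral_mul {g ρ : α → ℝ} {s : Set α} {c : ℝ} (hs : MeasurableSet s)
    (hρ : Integrable ρ μ) (hgρ : Integrable (fun z => g z * ρ z) μ) (hρ0 : ∀ z, 0 ≤ ρ z)
    (hg0 : ∀ z, 0 ≤ g z) (hc : ∀ z ∈ s, c ≤ g z) :
    c * ∫ z in s, ρ z ∂μ ≤ ∫ z, g z * ρ z ∂μ := by
  rw [← integral_const_mul]
  calc ∫ z in s, c * ρ z ∂μ ≤ ∫ z in s, g z * ρ z ∂μ :=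
        setIntegral_mono_on (hρ.const_mul c).integrableOn hgρ.integrableOn hs
          fun z hz => mul_le_mul_of_nonneg_right (hc z hz) (hρ0 z)
    _ ≤ ∫ z, g z * ρ z ∂μ :=
        setIntegral_le_integral hgρ (Eventually.of_forall fun z => mul_nonneg (hg0 z) (hρ0 z))

theorem integral_le_mul_card_of_forall_mul_setIntegral_le {f ρ : α → ℝ} {B : ι → Set α}
    {t : Finset ι} {A : ℝ} (hA : 0 ≤ A) (hB : ∀ p, MeasurableSet (B p)) (hρ : Integrable ρ μ)
    (hρ0 : 0 ≤ᵐ[μ] ρ) (hf0 : ∀ x, 0 ≤ f x)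
    (hf : ∀ x, f x ≠ 0 → ρ x ≠ 0 ∧ ∃ p ∈ t, x ∈ B p ∧ f x * ∫ z in B p, ρ z ∂μ ≤ A * ρ x) :
    ∫ x, f x ∂μ ≤ A * t.card := by
  set I := fun p => ∫ z in B p, ρ z ∂μ
  set g := fun p => (B p).indicator fun x => ENNReal.ofReal (A * (ρ x / I p))
  have hnull : ∀ᵐ x ∂μ, ∀ p ∈ t, x ∈ B p → I p = 0 → ρ x = 0 := by
    refine (eventually_all_finset t).2 fun p _ => ?_
    by_cases hp : I p = 0
    · have := (setIntegral_eq_zero_iff_of_nonneg_ae (ae_restrict_of_ae hρ0) hρ.integrableOn).1 hp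
      filter_upwards [(ae_restrict_iff' (hB p)).1 this] with x hx hxB _ using hx hxB
    · exact Eventually.of_forall fun x _ h => absurd h hp
  have hle : ∀ᵐ x ∂μ, ENNReal.ofReal (f x) ≤ ∑ p ∈ t, g p x := by
    filter_upwards [hnull] with x hx
    rcases eq_or_ne (f x) 0 with hfx | hfx
    · simp [hfx]
    obtain ⟨hρx, p, hp, hxB, hfI⟩ := hf x hfx
    have hIp : 0 < I p :=
      (integral_nonneg_of_ae (ae_restrict_of_ae hρ0)).lt_of_ne' (mt (hx p hp hxB) hρx)
    calc ENNReal.ofReal (f x) ≤ g p x := by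
          rw [show g p x = _ from indicator_of_mem hxB _, mul_div_assoc']
          exact ENNReal.ofReal_le_ofReal ((le_div_iff₀ hIp).2 hfI)
      _ ≤ ∑ q ∈ t, g q x := Finset.single_le_sum (f := fun q => g q x) (fun _ _ => zero_le) hp
  have hlint : ∫⁻ x, ENNReal.ofReal (f x) ∂μ ≤ ENNReal.ofReal (A * t.card) := calc
    _ ≤ ∫⁻ x, ∑ p ∈ t, g p x ∂μ := lintegral_mono_ae hle
    _ = ∑ p ∈ t, ENNReal.ofReal A * ∫⁻ x in B p, ENNReal.ofReal (ρ x / I p) ∂μ := by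
        rw [lintegral_finsetSum' t (f := g) fun p _ => (ENNReal.measurable_ofReal.comp_aemeasurable
          ((hρ.aemeasurable.div_const _).const_mul A)).indicator (hB p)]
        refine Finset.sum_congr rfl fun p _ => ?_
        simp_rw [g, lintegral_indicator (hB p), ENNReal.ofReal_mul hA]
        exact lintegral_const_mul' _ _ ENNReal.ofReal_ne_top
    _ ≤ ∑ _p ∈ t, ENNReal.ofReal A := Finset.sum_le_sum fun p _ =>
        mul_le_of_le_one_right' (lintegral_ofReal_div_setIntegral_le_one hρ.integrableOn
          (ae_restrict_of_ae hρ0))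
    _ = ENNReal.ofReal (A * t.card) := by
        rw [Finset.sum_const, nsmul_eq_mul, ENNReal.ofReal_mul hA, ENNReal.ofReal_natCast, mul_comm]
  by_cases hfi : Integrable f μ
  · rw [integral_eq_lintegral_of_nonneg_ae (Eventually.of_forall hf0) hfi.1]
    exact ENNReal.toReal_le_of_le_ofReal (by positivity) hlint
  · rw [integral_undef hfi]
    positivity

end Covering

section Rescaling

variable {E : Type*} [NormedAddCommGroup E] [NormedSpace ℝ E] {r ε : ℝ}

lemma mem_ball_of_inv_smul_sub_mem_ball {x y p : E} (hr : 0 < r)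
    (h : r⁻¹ • (x - y) ∈ ball p ε) : x ∈ ball (y + r • p) (r * ε) := by
  have hxy : x - (y + r • p) = r • (r⁻¹ • (x - y) - p) := by
    rw [smul_sub, smul_inv_smul₀ hr.ne']
    abel
  rw [mem_ball, dist_eq_norm, hxy, norm_smul, Real.norm_of_nonneg hr.le]
  exact mul_lt_mul_of_pos_left (mem_ball_iff_norm.1 h) hr

lemma norm_inv_smul_sub_lt {x z q : E} (hr : 0 < r) (hx : x ∈ ball q (r * ε))
    (hz : z ∈ ball q (r * ε)) : ‖r⁻¹ • (x - z)‖ < 2 * ε := by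
  rw [norm_smul, norm_inv, Real.norm_of_nonneg hr.le, ← dist_eq_norm, inv_mul_lt_iff₀ hr]
  linarith [dist_triangle_right x z q, mem_ball.1 hx, mem_ball.1 hz]

variable [MeasurableSpace E] [OpensMeasurableSpace E] {μ : Measure E} {K ρ : E → ℝ}

lemma rescaled_kernel_ratio_mul_setIntegral_ball_le {a c M : ℝ} {x y q : E} (ha : 0 < a)
    (hr : 0 < r) (hc : 0 < c) (hKnonneg : ∀ u, 0 ≤ K u) (hKM : ∀ u, K u ≤ M)
    (hKc : ∀ u, ‖u‖ < 2 * ε → c ≤ K u) (hρ : Integrable ρ μ) (hρ0 : ∀ z, 0 ≤ ρ z)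
    (hint : Integrable (fun z => a * K (r⁻¹ • (x - z)) * ρ z) μ) (hx : x ∈ ball q (r * ε)) :
    a * K (r⁻¹ • (x - y)) * ρ x / (∫ z, a * K (r⁻¹ • (x - z)) * ρ z ∂μ) *
      ∫ z in ball q (r * ε), ρ z ∂μ ≤ M / c * ρ x := by
  set D := ∫ z, a * K (r⁻¹ • (x - z)) * ρ z ∂μ
  set I := ∫ z in ball q (r * ε), ρ z ∂μ
  have hI : 0 ≤ I := setIntegral_nonneg measurableSet_ball fun z _ => hρ0 z
  have hM : 0 ≤ M := (hKnonneg 0).trans (hKM 0)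
  have hD : a * c * I ≤ D :=
    mul_setIntegral_le_integral_mul measurableSet_ball hρ hint hρ0
      (fun z => mul_nonneg ha.le (hKnonneg _))
      fun z hz => mul_le_mul_of_nonneg_left (hKc _ (norm_inv_smul_sub_lt hr hx hz)) ha.le
  rcases (hD.trans' (by positivity)).eq_or_lt with hD0 | hD0
  · rw [← hD0, div_zero, zero_mul]
    exact mul_nonneg (div_nonneg hM hc.le) (hρ0 x)
  rw [div_mul_eq_mul_div, div_le_iff₀ hD0]
  calc a * K (r⁻¹ • (x - y)) * ρ x * I ≤ a * M * ρ x * I := by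
        gcongr
        · exact hρ0 x
        · exact hKM _
    _ = M / c * ρ x * (a * c * I) := by field_simp
    _ ≤ M / c * ρ x * D := by
        gcongr
        exact mul_nonneg (div_nonneg hM hc.le) (hρ0 x)

theorem exists_integral_rescaled_kernel_ratio_le (hKcont : Continuous K)
    (hKnonneg : ∀ u, 0 ≤ K u) (hKsupp : HasCompactSupport K) (hK0 : 0 < K 0) :
    ∃ C : ℝ, 0 < C ∧ ∀ (μ : Measure E) (a r : ℝ), 0 < a → 0 < r →
      ∀ ρ : E → ℝ, Integrable ρ μ → (∀ x, 0 ≤ ρ x) → ∀ y : E,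
        (∫ x, if ρ x = 0 then 0
              else a * K (r⁻¹ • (x - y)) * ρ x / ∫ z, a * K (r⁻¹ • (x - z)) * ρ z ∂μ ∂μ) ≤ C := by
  obtain ⟨M, hM⟩ := hKcont.bounded_above_of_compact_support hKsupp
  have hKM : ∀ u, K u ≤ M := fun u => (Real.le_norm_self _).trans (hM u)
  set c := K 0 / 2
  have hc : 0 < c := half_pos hK0
  have hMc : 0 ≤ M / c := div_nonneg ((norm_nonneg _).trans (hM 0)) hc.le
  obtain ⟨ε, hε, hKc⟩ : ∃ ε > 0, ∀ u : E, ‖u‖ < 2 * ε → c ≤ K u := by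
    obtain ⟨ε, hε, h⟩ := Metric.eventually_nhds_iff.1
      (hKcont.continuousAt.eventually (lt_mem_nhds (half_lt_self hK0)))
    refine ⟨ε / 2, half_pos hε, fun u hu => (h ?_).le⟩
    rw [dist_zero_right]
    linarith
  obtain ⟨s, -, hs, hcover⟩ := hKsupp.isCompact.finite_cover_balls hε
  refine ⟨M / c * hs.toFinset.card + 1, by positivity, fun μ a r ha hr ρ hρ hρ0 y => ?_⟩
  have hint (x : E) : Integrable (fun z => a * K (r⁻¹ • (x - z)) * ρ z) μ := by
    refine hρ.bdd_mul (c := a * M) (Continuous.aestronglyMeasurable (by fun_prop))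
      (Eventually.of_forall fun z => ?_)
    rw [Real.norm_of_nonneg (mul_nonneg ha.le (hKnonneg _))]
    exact mul_le_mul_of_nonneg_left (hKM _) ha.le
  refine (integral_le_mul_card_of_forall_mul_setIntegral_le (B := fun p => ball (y + r • p) (r * ε))
    hMc (fun _ => measurableSet_ball) hρ (Eventually.of_forall hρ0) (fun x => ?_)
    (fun x hx => ?_)).trans (lt_add_one _).le
  · split_ifs
    · rfl
    · exact div_nonneg (mul_nonneg (mul_nonneg ha.le (hKnonneg _)) (hρ0 x))
        (integral_nonneg fun z => mul_nonneg (mul_nonneg ha.le (hKnonneg _)) (hρ0 z))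
  · have hρx : ρ x ≠ 0 := fun h => hx (if_pos h)
    simp only [if_neg hρx] at hx ⊢
    have hKx : K (r⁻¹ • (x - y)) ≠ 0 := fun h => hx (by rw [h, mul_zero, zero_mul, zero_div])
    obtain ⟨p, hp, hxp⟩ := mem_iUnion₂.1 (hcover (subset_tsupport K hKx))
    have hxB := mem_ball_of_inv_smul_sub_mem_ball hr hxp
    exact ⟨hρx, p, hs.mem_toFinset.2 hp, hxB, rescaled_kernel_ratio_mul_setIntegral_ball_le ha hr hc
      hKnonneg hKM hKc hρ hρ0 (hint x) hxB⟩

end Rescaling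

theorem kernel_normalization_bound_rescaled_general
    (d : ℕ)
    (K : EuclideanSpace ℝ (Fin d) → ℝ)
    (hKcont : Continuous K) (hKnonneg : ∀ x, 0 ≤ K x)
    (hKsupp : HasCompactSupport K)
    (hK0 : 0 < K 0) :
    ∃ C : ℝ, 0 < C ∧
      ∀ r : ℝ, 0 < r →
      ∀ ρ : EuclideanSpace ℝ (Fin d) → ℝ,
        Integrable ρ → (∀ x, 0 ≤ ρ x) →
        ∀ y : EuclideanSpace ℝ (Fin d),
          (∫ x, if ρ x = 0 then 0
                else (r⁻¹ ^ d * K (r⁻¹ • (x - y))) * ρ x /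
                  ∫ z, (r⁻¹ ^ d * K (r⁻¹ • (x - z))) * ρ z) ≤ C := by
  obtain ⟨C, hC, hbound⟩ := exists_integral_rescaled_kernel_ratio_le hKcont hKnonneg hKsupp hK0
  exact ⟨C, hC, fun r hr ρ hρ hρ0 y => hbound volume _ r (by positivity) hr ρ hρ hρ0 y⟩

/-- Uniform-in-`r` kernel normalization bound for rescaled kernels
`K^r(x) = r^{-d} K(x/r)`. -/
theorem kernel_normalization_bound_rescaled
    (d : ℕ) (hd : 0 < d)
    (K : EuclideanSpace ℝ (Fin d) → ℝ)
    (hKcont : Continuous K) (hKnonneg : ∀ x, 0 ≤ K x)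
    (hKsupp : HasCompactSupport K)
    (hK0 : 0 < K 0) (hKint : ∫ x, K x = 1) :
    ∃ C : ℝ, 0 < C ∧
      ∀ r : ℝ, 0 < r →
      ∀ ρ : EuclideanSpace ℝ (Fin d) → ℝ,
        Integrable ρ → (∀ x, 0 ≤ ρ x) →
        ∀ y : EuclideanSpace ℝ (Fin d),
          (∫ x, if ρ x = 0 then 0
                else (r⁻¹ ^ d * K (r⁻¹ • (x - y))) * ρ x /
                  ∫ z, (r⁻¹ ^ d * K (r⁻¹ • (x - z))) * ρ z) ≤ C :=
  kernel_normalization_bound_rescaled_general d K hKcont hKnonneg hKsupp hK0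
end
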